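/- In the root system Φ of type D_l (l ≥ 5), the root subsystems of type A₃ form exactly two orbits under the action of the Weyl group W(D_l). -/

import Mathlib

open scoped RealInnerProductSpace

noncomputable section

/-- The root system of type `D_l`, normalized so all roots have length `1`:
the vectors `(±eᵢ ± eⱼ)/√2` for `i ≠ j`. -/
def Droots (l : ℕ) : Set (EuclideanSpace ℝ (Fin l)) :=
  {v | ∃ i j : Fin l, i ≠ j ∧ ∃ a b : ℝ, (a = 1 ∨ a = -1) ∧ (b = 1 ∨ b = -1) ∧
    ∀ t, v t = (a * (if t = i then 1 else 0) + b * (if t = j then 1 else 0)) / Real.sqrt 2}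

/-- The root system of type `E₈`, normalized so all roots have length `1`:
the vectors `(±eᵢ ± eⱼ)/√2` (`i ≠ j`) together with `(ε₁,…,ε₈)/(2√2)` where
each `εᵢ = ±1` and the number of minus signs is even. -/
def E8roots : Set (EuclideanSpace ℝ (Fin 8)) :=
  {v | (∃ i j : Fin 8, i ≠ j ∧ ∃ a b : ℝ, (a = 1 ∨ a = -1) ∧ (b = 1 ∨ b = -1) ∧
      ∀ t, v t = (a * (if t = i then 1 else 0) + b * (if t = j then 1 else 0)) / Real.sqrt 2) ∨
    (∃ ε : Fin 8 → ℝ, (∀ i, ε i = 1 ∨ ε i = -1) ∧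
      Even (Finset.univ.filter (fun i => ε i = -1)).card ∧
      ∀ t, v t = ε t / (2 * Real.sqrt 2))}

/-- The root system of type `E₇`: the roots of `E₈` orthogonal to the root
`(e₇ + e₈)/√2`. -/
def E7roots : Set (EuclideanSpace ℝ (Fin 8)) := {v ∈ E8roots | v 6 + v 7 = 0}

/-- The root system of type `E₆`: the roots of `E₈` orthogonal to the
`A₂`-pair `(e₇+e₈)/√2`, `(e₆+e₇)/√2`. -/
def E6roots : Set (EuclideanSpace ℝ (Fin 8)) :=
  {v ∈ E8roots | v 6 + v 7 = 0 ∧ v 5 + v 6 = 0}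

/-- `Φ ⊆ E` is (the image under a linear isometry of) a root system of type
`D_l` (`l ≥ 5`) or `E₆`, `E₇`, `E₈`, with all roots of length `1`. -/
def IsDERootSystem {E : Type*} [NormedAddCommGroup E] [InnerProductSpace ℝ E]
    (Φ : Set E) : Prop :=
  (∃ l : ℕ, 5 ≤ l ∧ ∃ f : EuclideanSpace ℝ (Fin l) →ₗᵢ[ℝ] E, Φ = f '' Droots l) ∨
  (∃ f : EuclideanSpace ℝ (Fin 8) →ₗᵢ[ℝ] E,
    Φ = f '' E6roots ∨ Φ = f '' E7roots ∨ Φ = f '' E8roots)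

end


noncomputable section
namespace A3D

variable {l : ℕ}

/-- the root `(a eᵢ + b eⱼ)/√2` -/
def rt (i j : Fin l) (a b : ℝ) : EuclideanSpace ℝ (Fin l) :=
  WithLp.toLp 2 (fun t => (a * (if t = i then 1 else 0) + b * (if t = j then 1 else 0)) / Real.sqrt 2)

lemma s2pos : (0:ℝ) < Real.sqrt 2 := Real.sqrt_pos.2 (by norm_num)
lemma s2ne : (Real.sqrt 2 : ℝ) ≠ 0 := ne_of_gt s2pos
lemma s2sq : Real.sqrt 2 * Real.sqrt 2 = 2 := Real.mul_self_sqrt (by norm_num)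

abbrev Sgn (a : ℝ) : Prop := a = 1 ∨ a = -1

lemma Sgn.ne {a : ℝ} (h : Sgn a) : a ≠ 0 := by rcases h with h|h <;> simp [h]
lemma Sgn.sq {a : ℝ} (h : Sgn a) : a * a = 1 := by rcases h with h|h <;> simp [h]
lemma Sgn.neg {a : ℝ} (h : Sgn a) : Sgn (-a) := by rcases h with h|h <;> simp [h, Sgn]
lemma Sgn.mul {a b : ℝ} (h : Sgn a) (h' : Sgn b) : Sgn (a*b) := by
  rcases h with h|h <;> rcases h' with h'|h' <;> simp [h, h', Sgn]

lemma rt_mem {i j : Fin l} {a b : ℝ} (hij : i ≠ j) (ha : Sgn a) (hb : Sgn b) :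
    rt i j a b ∈ Droots l := ⟨i, j, hij, a, b, ha, hb, fun _ => rfl⟩

lemma mem_iff {v : EuclideanSpace ℝ (Fin l)} :
    v ∈ Droots l ↔ ∃ i j : Fin l, i ≠ j ∧ ∃ a b : ℝ, Sgn a ∧ Sgn b ∧ v = rt i j a b := by
  constructor
  · rintro ⟨i, j, hij, a, b, ha, hb, hv⟩
    exact ⟨i, j, hij, a, b, ha, hb, PiLp.ext hv⟩
  · rintro ⟨i, j, hij, a, b, ha, hb, rfl⟩
    exact rt_mem hij ha hb

lemma rt_apply_left {i j : Fin l} (hij : i ≠ j) (a b : ℝ) : rt i j a b i = a / Real.sqrt 2 := by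
  simp [rt, hij]

lemma rt_apply_right {i j : Fin l} (hij : i ≠ j) (a b : ℝ) : rt i j a b j = b / Real.sqrt 2 := by
  simp [rt, hij.symm]

lemma rt_apply_other {i j t : Fin l} (hti : t ≠ i) (htj : t ≠ j) (a b : ℝ) :
    rt i j a b t = 0 := by simp [rt, hti, htj]

lemma rt_comm (i j : Fin l) (a b : ℝ) : rt i j a b = rt j i b a := by
  ext t; simp only [rt, PiLp.neg_apply, PiLp.toLp_apply]; split_ifs <;> ring

lemma rt_neg (i j : Fin l) (a b : ℝ) : rt i j (-a) (-b) = - rt i j a b := by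
  ext t; simp only [rt, PiLp.neg_apply, PiLp.toLp_apply]; split_ifs <;> ring

lemma rt_smul (i j : Fin l) (c a b : ℝ) : c • rt i j a b = rt i j (c*a) (c*b) := by
  ext t; simp only [rt, PiLp.smul_apply, smul_eq_mul, PiLp.toLp_apply]; split_ifs <;> ring

/-- inner product with an `rt` on the left -/
lemma inner_rt {i j : Fin l} (hij : i ≠ j) (a b : ℝ) (w : EuclideanSpace ℝ (Fin l)) :
    ⟪rt i j a b, w⟫ = (a * w i + b * w j) / Real.sqrt 2 := by
  rw [PiLp.inner_apply]
  have h : ∀ t, (inner ℝ (rt i j a b t) (w t))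
      = (if t = i then a * w t / Real.sqrt 2 else 0)
        + (if t = j then b * w t / Real.sqrt 2 else 0) := by
    intro t
    rcases eq_or_ne t i with rfl|hti
    · rw [rt_apply_left hij]; simp [hij, RCLike.inner_apply]; ring
    · rcases eq_or_ne t j with rfl|htj
      · rw [rt_apply_right hij]; simp [hti, RCLike.inner_apply]; ring
      · rw [rt_apply_other hti htj]; simp [hti, htj, RCLike.inner_apply]
  rw [Finset.sum_congr rfl (fun t _ => h t), Finset.sum_add_distrib,
    Finset.sum_ite_eq' _ i, Finset.sum_ite_eq' _ j]
  simp; ring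

lemma inner_rt_rt {i j k m : Fin l} (hij : i ≠ j) (hkm : k ≠ m) (a b c d : ℝ) :
    ⟪rt i j a b, rt k m c d⟫ =
      (a * c * (if i = k then 1 else 0) + a * d * (if i = m then 1 else 0)
        + b * c * (if j = k then 1 else 0) + b * d * (if j = m then 1 else 0)) / 2 := by
  rw [inner_rt hij]
  have e1 : rt k m c d i = ((if i = k then c else 0) + (if i = m then d else 0)) / Real.sqrt 2 := by
    simp only [rt, PiLp.toLp_apply]; split_ifs <;> ring
  have e2 : rt k m c d j = ((if j = k then c else 0) + (if j = m then d else 0)) / Real.sqrt 2 := by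
    simp only [rt, PiLp.toLp_apply]; split_ifs <;> ring
  rw [e1, e2]
  have key : ∀ X Y : ℝ, (a * (X / Real.sqrt 2) + b * (Y / Real.sqrt 2)) / Real.sqrt 2
      = (a * X + b * Y) / 2 := by
    intro X Y
    rw [div_eq_div_iff s2ne (by norm_num : (2:ℝ) ≠ 0)]
    have h := s2sq
    field_simp
    linear_combination (-(a * X) - b * Y) * h
  rw [key]
  congr 1
  split_ifs <;> ring

lemma norm_one {i j : Fin l} (hij : i ≠ j) {a b : ℝ} (ha : Sgn a) (hb : Sgn b) :
    ⟪rt i j a b, rt i j a b⟫ = 1 := by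
  rw [inner_rt_rt hij hij]
  simp [hij, hij.symm, ha.sq, hb.sq]

lemma Sgn.eq_neg_of_mul {a b : ℝ} (ha : Sgn a) (hb : Sgn b) (h : a * b = -1) : b = -a := by
  rcases ha with rfl|rfl <;> rcases hb with rfl|rfl <;> linarith

lemma rt_eval {i j : Fin l} (a b : ℝ) (t : Fin l) :
    rt i j a b t = ((if t = i then a else 0) + (if t = j then b else 0)) / Real.sqrt 2 := by
  simp only [rt, PiLp.toLp_apply]; split_ifs <;> ring

lemma rt_inj {i j k m : Fin l} {a b c d : ℝ} (hij : i ≠ j) (hkm : k ≠ m)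
    (ha : Sgn a) (hb : Sgn b) (hc : Sgn c) (hd : Sgn d)
    (h : rt i j a b = rt k m c d) :
    (i = k ∧ j = m ∧ a = c ∧ b = d) ∨ (i = m ∧ j = k ∧ a = d ∧ b = c) := by
  have hi : a = (if i = k then c else 0) + (if i = m then d else 0) := by
    have h1 := congrArg (fun v : EuclideanSpace ℝ (Fin l) => v i) h
    rw [rt_apply_left hij, rt_eval] at h1
    rw [div_eq_div_iff s2ne s2ne] at h1
    exact mul_right_cancel₀ s2ne h1
  have hj : b = (if j = k then c else 0) + (if j = m then d else 0) := by
    have h1 := congrArg (fun v : EuclideanSpace ℝ (Fin l) => v j) h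
    rw [rt_apply_right hij, rt_eval] at h1
    rw [div_eq_div_iff s2ne s2ne] at h1
    exact mul_right_cancel₀ s2ne h1
  by_cases hik : i = k
  · have him : i ≠ m := fun hm => hkm (hik.symm.trans hm)
    have hjk : j ≠ k := fun hm => hij (hik.trans hm.symm)
    rw [if_pos hik, if_neg him, add_zero] at hi
    by_cases hjm : j = m
    · rw [if_neg hjk, if_pos hjm, zero_add] at hj
      exact Or.inl ⟨hik, hjm, hi, hj⟩
    · rw [if_neg hjk, if_neg hjm, add_zero] at hj
      exact absurd hj hb.ne
  · by_cases him : i = m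
    · have hjm : j ≠ m := fun hm => hij (him.trans hm.symm)
      rw [if_neg hik, if_pos him, zero_add] at hi
      by_cases hjk : j = k
      · rw [if_pos hjk, if_neg hjm, add_zero] at hj
        exact Or.inr ⟨him, hjk, hi, hj⟩
      · rw [if_neg hjk, if_neg hjm, add_zero] at hj
        exact absurd hj hb.ne
    · rw [if_neg hik, if_neg him, add_zero] at hi
      exact absurd hi ha.ne

/-- Normal form for a pair of roots at angle `2π/3`. -/
lemma pair {α β : EuclideanSpace ℝ (Fin l)} (hα : α ∈ Droots l) (hβ : β ∈ Droots l)
    (h : ⟪α, β⟫ = -(1/2)) :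
    ∃ (p q r : Fin l) (a b d : ℝ), p ≠ q ∧ q ≠ r ∧ p ≠ r ∧ Sgn a ∧ Sgn b ∧ Sgn d ∧
      α = rt p q a b ∧ β = rt q r (-b) d := by
  obtain ⟨i, j, hij, a, b, ha, hb, rfl⟩ := mem_iff.1 hα
  obtain ⟨k, m, hkm, c, d, hc, hd, rfl⟩ := mem_iff.1 hβ
  rw [inner_rt_rt hij hkm] at h
  by_cases hik : i = k
  · have him : i ≠ m := fun hm => hkm (hik.symm.trans hm)
    have hjk : j ≠ k := fun hm => hij (hik.trans hm.symm)
    by_cases hjm : j = m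
    · rw [if_pos hik, if_neg him, if_neg hjk, if_pos hjm] at h
      exfalso
      rcases ha with rfl|rfl <;> rcases hb with rfl|rfl <;> rcases hc with rfl|rfl <;>
        rcases hd with rfl|rfl <;> norm_num at h
    · rw [if_pos hik, if_neg him, if_neg hjk, if_neg hjm] at h
      have hac : a * c = -1 := by linarith [h]
      refine ⟨j, i, m, b, a, d, hij.symm, him, hjm, hb, ha, hd, by rw [rt_comm], ?_⟩
      rw [← hik, Sgn.eq_neg_of_mul ha hc hac]
  · by_cases him : i = m
    · have hjm : j ≠ m := fun hm => hij (him.trans hm.symm)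
      by_cases hjk : j = k
      · rw [if_neg hik, if_pos him, if_pos hjk, if_neg hjm] at h
        exfalso
        rcases ha with rfl|rfl <;> rcases hb with rfl|rfl <;> rcases hc with rfl|rfl <;>
          rcases hd with rfl|rfl <;> norm_num at h
      · rw [if_neg hik, if_pos him, if_neg hjk, if_neg hjm] at h
        have had : a * d = -1 := by linarith [h]
        refine ⟨j, i, k, b, a, c, hij.symm, hik, hjk, hb, ha, hc,
          by rw [rt_comm], ?_⟩
        rw [rt_comm, ← him, Sgn.eq_neg_of_mul ha hd had]
    · by_cases hjk : j = k
      · have hjm : j ≠ m := fun hm => hkm (hjk.symm.trans hm)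
        rw [if_neg hik, if_neg him, if_pos hjk, if_neg hjm] at h
        have hbc : b * c = -1 := by linarith [h]
        refine ⟨i, j, m, a, b, d, hij, hjm, him, ha, hb, hd, rfl, ?_⟩
        rw [← hjk, Sgn.eq_neg_of_mul hb hc hbc]
      · by_cases hjm : j = m
        · rw [if_neg hik, if_neg him, if_neg hjk, if_pos hjm] at h
          have hbd : b * d = -1 := by linarith [h]
          refine ⟨i, j, k, a, b, c, hij, hjk, hik, ha, hb, hc, rfl, ?_⟩
          rw [rt_comm, ← hjm, Sgn.eq_neg_of_mul hb hd hbd]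
        · rw [if_neg hik, if_neg him, if_neg hjk, if_neg hjm] at h
          norm_num at h

/-- Classification of `A₃` configurations in `D_l`: type `D₃` (3 coordinates)
or type `A₃` (4 coordinates). -/
lemma classify {α β γ : EuclideanSpace ℝ (Fin l)}
    (hα : α ∈ Droots l) (hβ : β ∈ Droots l) (hγ : γ ∈ Droots l)
    (hag : ⟪α, γ⟫ = 0) (hab : ⟪α, β⟫ = -(1/2)) (hbg : ⟪β, γ⟫ = -(1/2)) :
    (∃ (p q r : Fin l) (a b d : ℝ), p ≠ q ∧ q ≠ r ∧ p ≠ r ∧ Sgn a ∧ Sgn b ∧ Sgn d ∧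
      α = rt p q a b ∧ β = rt q r (-b) d ∧ γ = rt p q (-a) b) ∨
    (∃ (p q r s : Fin l) (a b d g : ℝ), p ≠ q ∧ p ≠ r ∧ p ≠ s ∧ q ≠ r ∧ q ≠ s ∧ r ≠ s ∧
      Sgn a ∧ Sgn b ∧ Sgn d ∧ Sgn g ∧
      α = rt p q a b ∧ β = rt q r (-b) d ∧ γ = rt r s (-d) g) := by
  obtain ⟨p, q, r, a, b, d, hpq, hqr, hpr, ha, hb, hd, hA, hB⟩ := pair hα hβ hab
  obtain ⟨p', q', r', a', b', d', hpq', hqr', hpr', ha', hb', hd', hB', hG⟩ := pair hβ hγ hbg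
  rcases rt_inj hqr hpq' hb.neg hd ha' hb' (hB.symm.trans hB') with
    ⟨h1, h2, _h3, h4⟩ | ⟨h1, h2, h3, h4⟩
  · -- q = p', r = q' : the second pair continues past `r`
    have hG' : γ = rt r r' (-d) d' := by rw [hG, ← h2, ← h4]
    have hrr' : r ≠ r' := h2 ▸ hqr'
    by_cases hr'p : r' = p
    · exfalso
      rw [hA, hG', inner_rt_rt hpq hrr', if_neg hpr, if_pos hr'p.symm,
        if_neg hqr, if_neg (hr'p ▸ hpq.symm : q ≠ r')] at hag
      rcases ha with rfl|rfl <;> rcases hd' with rfl|rfl <;> norm_num at hag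
    · right
      exact ⟨p, q, r, r', a, b, d, d', hpq, hpr, fun h => hr'p h.symm, hqr,
        h1 ▸ hpr', h2 ▸ hqr', ha, hb, hd, hd', hA, hB, hG'⟩
  · -- q = q', r = p' : the second pair turns back at `q`
    have hbb : -b' = b := by rw [← h3, neg_neg]
    have hG' : γ = rt q r' b d' := by rw [hG, ← h1, hbb]
    have hqr'' : q ≠ r' := h1 ▸ hqr'
    by_cases hpr'' : p = r'
    · left
      rw [hA, hG', inner_rt_rt hpq hqr'', if_neg hpq, if_pos hpr'', if_pos rfl,
        if_neg hqr''] at hag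
      have hb2 : b * b = 1 := hb.sq
      have had : a * d' = -1 := by linarith
      have hda : d' = -a := Sgn.eq_neg_of_mul ha hd' had
      refine ⟨p, q, r, a, b, d, hpq, hqr, hpr, ha, hb, hd, hA, hB, ?_⟩
      rw [hG', hda, rt_comm, ← hpr'']
    · exfalso
      rw [hA, hG', inner_rt_rt hpq hqr'', if_neg hpq, if_neg hpr'', if_pos rfl,
        if_neg hqr''] at hag
      have hb2 : b * b = 1 := hb.sq
      norm_num [hb2] at hag

/-! ### Isometries: diagonal sign changes and coordinate permutations -/

lemma half2 (c e xt : ℝ) :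
    xt - 2 * (c / Real.sqrt 2) * (e / Real.sqrt 2) = xt - c * e := by
  rw [show 2 * (c / Real.sqrt 2) * (e / Real.sqrt 2) = c * e * (2 / (Real.sqrt 2 * Real.sqrt 2)) by ring,
    s2sq, div_self two_ne_zero, mul_one]

def gens (l : ℕ) : Set (EuclideanSpace ℝ (Fin l) ≃ₗᵢ[ℝ] EuclideanSpace ℝ (Fin l)) :=
  {w | ∃ β ∈ Droots l, ∀ x, w x = x - (2 * ⟪x, β⟫) • β}

def Wgp (l : ℕ) : Subgroup (EuclideanSpace ℝ (Fin l) ≃ₗᵢ[ℝ] EuclideanSpace ℝ (Fin l)) :=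
  Subgroup.closure (gens l)

/-- diagonal sign-change isometry -/
def diagIso (η : Fin l → ℝ) (hη : ∀ t, Sgn (η t)) :
    EuclideanSpace ℝ (Fin l) ≃ₗᵢ[ℝ] EuclideanSpace ℝ (Fin l) :=
  LinearEquiv.isometryOfInner
    { toFun := fun x => WithLp.toLp 2 (fun t => η t * x t)
      map_add' := fun x y => by ext t; simp [mul_add]
      map_smul' := fun c x => by ext t; simp; ring
      invFun := fun x => WithLp.toLp 2 (fun t => η t * x t)
      left_inv := fun x => by ext t; simp [← mul_assoc, (hη t).sq]
      right_inv := fun x => by ext t; simp [← mul_assoc, (hη t).sq] }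
    (by
      intro x y
      rw [PiLp.inner_apply, PiLp.inner_apply]
      refine Finset.sum_congr rfl fun t _ => ?_
      simp only [RCLike.inner_apply, starRingEnd_apply, star_trivial, LinearEquiv.coe_mk, LinearMap.coe_mk, AddHom.coe_mk, PiLp.toLp_apply]
      linear_combination (x t * y t) * (hη t).sq)

lemma diagIso_apply (η : Fin l → ℝ) (hη) (x : EuclideanSpace ℝ (Fin l)) (t : Fin l) :
    diagIso η hη x t = η t * x t := rfl

lemma diagIso_rt {i j : Fin l} (hij : i ≠ j) (η : Fin l → ℝ) (hη) (a b : ℝ) :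
    diagIso η hη (rt i j a b) = rt i j (η i * a) (η j * b) := by
  ext t
  rw [diagIso_apply, rt_eval, rt_eval]
  rcases eq_or_ne t i with rfl|h1
  · rw [if_pos rfl, if_pos rfl, if_neg hij, if_neg hij]; ring
  · rcases eq_or_ne t j with rfl|h2
    · rw [if_neg h1, if_neg h1, if_pos rfl, if_pos rfl]; ring
    · rw [if_neg h1, if_neg h1, if_neg h2, if_neg h2]; ring

/-- coordinate permutation isometry -/
def permIso (σ : Equiv.Perm (Fin l)) :
    EuclideanSpace ℝ (Fin l) ≃ₗᵢ[ℝ] EuclideanSpace ℝ (Fin l) :=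
  LinearEquiv.isometryOfInner
    { toFun := fun x => WithLp.toLp 2 (fun t => x (σ.symm t))
      map_add' := fun x y => by ext t; simp
      map_smul' := fun c x => by ext t; simp
      invFun := fun x => WithLp.toLp 2 (fun t => x (σ t))
      left_inv := fun x => by
        ext t; exact congrArg x (Equiv.symm_apply_apply σ t)
      right_inv := fun x => by
        ext t; exact congrArg x (Equiv.apply_symm_apply σ t) }
    (by
      intro x y
      rw [PiLp.inner_apply, PiLp.inner_apply]
      exact Equiv.sum_comp σ.symm fun t => inner ℝ (x t) (y t))

lemma permIso_apply (σ : Equiv.Perm (Fin l)) (x : EuclideanSpace ℝ (Fin l)) (t : Fin l) :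
    permIso σ x t = x (σ.symm t) := rfl

lemma permIso_rt (σ : Equiv.Perm (Fin l)) (i j : Fin l) (a b : ℝ) :
    permIso σ (rt i j a b) = rt (σ i) (σ j) a b := by
  ext t
  rw [permIso_apply, rt_eval, rt_eval]
  simp only [Equiv.symm_apply_eq]

lemma permIso_one : permIso (1 : Equiv.Perm (Fin l)) = 1 := by
  ext x; rfl

lemma permIso_mul (σ τ : Equiv.Perm (Fin l)) :
    permIso (σ * τ) = permIso σ * permIso τ := by
  ext x; rfl

lemma swap_formula {i j : Fin l} (hij : i ≠ j) (x : EuclideanSpace ℝ (Fin l)) :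
    permIso (Equiv.swap i j) x = x - (2 * ⟪x, rt i j 1 (-1)⟫) • rt i j 1 (-1) := by
  ext t
  rw [permIso_apply, Equiv.symm_swap, PiLp.sub_apply, PiLp.smul_apply, smul_eq_mul,
    real_inner_comm, inner_rt hij, rt_eval]
  rcases eq_or_ne t i with rfl|h1
  · rw [Equiv.swap_apply_left, if_pos rfl, if_neg hij]
    rw [show (1 * x t + -1 * x j) = (x t - x j) by ring, show ((1:ℝ) + 0) = 1 by ring,
      half2]
    ring
  · rcases eq_or_ne t j with rfl|h2
    · rw [Equiv.swap_apply_right, if_neg h1, if_pos rfl]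
      rw [show (1 * x i + -1 * x t) = (x i - x t) by ring, show ((0:ℝ) + -1) = -1 by ring,
        half2]
      ring
    · rw [Equiv.swap_apply_of_ne_of_ne h1 h2, if_neg h1, if_neg h2]
      rw [show ((0:ℝ) + 0) = 0 by ring, half2]
      ring

lemma swap_mem_gens {i j : Fin l} (hij : i ≠ j) : permIso (Equiv.swap i j) ∈ gens l :=
  ⟨rt i j 1 (-1), rt_mem hij (Or.inl rfl) (Or.inr rfl), swap_formula hij⟩

/-- the sign function flipping coordinates `i` and `j` -/
def flipSgn (i j : Fin l) : Fin l → ℝ := fun t => if t = i then -1 else if t = j then -1 else 1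

lemma flipSgn_sgn (i j : Fin l) : ∀ t, Sgn (flipSgn i j t) := by
  intro t; unfold flipSgn; split_ifs <;> simp [Sgn]

lemma negswap_formula {i j : Fin l} (hij : i ≠ j) (x : EuclideanSpace ℝ (Fin l)) :
    (permIso (Equiv.swap i j) * diagIso (flipSgn i j) (flipSgn_sgn i j)) x
      = x - (2 * ⟪x, rt i j 1 1⟫) • rt i j 1 1 := by
  ext t
  have happ : (permIso (Equiv.swap i j) * diagIso (flipSgn i j) (flipSgn_sgn i j)) x t
      = flipSgn i j (Equiv.swap i j t) * x (Equiv.swap i j t) := by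
    rw [LinearIsometryEquiv.coe_mul, Function.comp_apply, permIso_apply, Equiv.symm_swap,
      diagIso_apply]
  rw [happ, PiLp.sub_apply, PiLp.smul_apply, smul_eq_mul,
    real_inner_comm, inner_rt hij, rt_eval]
  rcases eq_or_ne t i with rfl|h1
  · rw [Equiv.swap_apply_left, if_pos rfl, if_neg hij]
    rw [show (1 * x t + 1 * x j) = (x t + x j) by ring, show ((1:ℝ) + 0) = 1 by ring, half2]
    simp [flipSgn, hij.symm]
  · rcases eq_or_ne t j with rfl|h2
    · rw [Equiv.swap_apply_right, if_neg h1, if_pos rfl]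
      rw [show (1 * x i + 1 * x t) = (x i + x t) by ring, show ((0:ℝ) + 1) = 1 by ring, half2]
      simp [flipSgn]
    · rw [Equiv.swap_apply_of_ne_of_ne h1 h2, if_neg h1, if_neg h2]
      rw [show ((0:ℝ) + 0) = 0 by ring, half2]
      simp [flipSgn, h1, h2]

lemma negswap_mem_gens {i j : Fin l} (hij : i ≠ j) :
    permIso (Equiv.swap i j) * diagIso (flipSgn i j) (flipSgn_sgn i j) ∈ gens l :=
  ⟨rt i j 1 1, rt_mem hij (Or.inl rfl) (Or.inl rfl), negswap_formula hij⟩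

lemma flip_mem_W {i j : Fin l} (hij : i ≠ j) :
    diagIso (flipSgn i j) (flipSgn_sgn i j) ∈ Wgp l := by
  have h1 : permIso (Equiv.swap i j) ∈ Wgp l :=
    Subgroup.subset_closure (swap_mem_gens hij)
  have h2 : permIso (Equiv.swap i j) * diagIso (flipSgn i j) (flipSgn_sgn i j) ∈ Wgp l :=
    Subgroup.subset_closure (negswap_mem_gens hij)
  have := mul_mem (inv_mem h1) h2
  rwa [← mul_assoc, inv_mul_cancel, one_mul] at this

lemma permIso_mem_W (σ : Equiv.Perm (Fin l)) : permIso σ ∈ Wgp l := by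
  refine Equiv.Perm.swap_induction_on σ ?_ ?_
  · rw [permIso_one]; exact one_mem _
  · intro f x y hxy ih
    rw [permIso_mul]
    exact mul_mem (Subgroup.subset_closure (swap_mem_gens hxy)) ih

lemma diag_mul (η₁ η₂ : Fin l → ℝ) (h₁ h₂) :
    diagIso η₁ h₁ * diagIso η₂ h₂
      = diagIso (fun t => η₁ t * η₂ t) (fun t => (h₁ t).mul (h₂ t)) := by
  ext x t
  rw [LinearIsometryEquiv.coe_mul, Function.comp_apply, diagIso_apply, diagIso_apply,
    diagIso_apply, mul_assoc]

lemma diag_one :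
    diagIso (fun _ : Fin l => (1:ℝ)) (fun _ => Or.inl rfl)
      = (1 : EuclideanSpace ℝ (Fin l) ≃ₗᵢ[ℝ] EuclideanSpace ℝ (Fin l)) := by
  ext x t; rw [diagIso_apply, one_mul]; rfl

/-! ### the Weyl group preserves the roots -/

lemma refl_neg (x w : EuclideanSpace ℝ (Fin l)) :
    x - (2 * ⟪x, -w⟫) • (-w) = x - (2 * ⟪x, w⟫) • w := by
  rw [inner_neg_right]
  simp [smul_neg, neg_smul]

lemma refl_root {v β : EuclideanSpace ℝ (Fin l)} (hv : v ∈ Droots l) (hβ : β ∈ Droots l) :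
    v - (2 * ⟪v, β⟫) • β ∈ Droots l := by
  obtain ⟨i, j, hij, a, b, ha, hb, rfl⟩ := mem_iff.1 hv
  obtain ⟨k, m, hkm, c, d, hc, hd, rfl⟩ := mem_iff.1 hβ
  have key : ∀ e : ℝ, Sgn e →
      rt i j a b - (2 * ⟪rt i j a b, rt k m 1 e⟫) • rt k m 1 e ∈ Droots l := by
    intro e he
    rcases he with rfl|rfl
    · rw [← negswap_formula hkm]
      rw [LinearIsometryEquiv.coe_mul, Function.comp_apply,
        diagIso_rt hij, permIso_rt]
      exact rt_mem (fun h => hij ((Equiv.swap k m).injective h))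
        ((flipSgn_sgn k m i).mul ha) ((flipSgn_sgn k m j).mul hb)
    · rw [← swap_formula hkm, permIso_rt]
      exact rt_mem (fun h => hij ((Equiv.swap k m).injective h)) ha hb
  rcases hc with rfl|rfl
  · exact key d hd
  · have hrw : rt k m (-1) d = -(rt k m 1 (-d)) := by
      rw [← rt_neg, neg_neg]
    rw [hrw, refl_neg]
    exact key (-d) hd.neg

lemma refl_invol {β : EuclideanSpace ℝ (Fin l)} (hβ : β ∈ Droots l)
    (x : EuclideanSpace ℝ (Fin l)) :
    (x - (2 * ⟪x, β⟫) • β) - (2 * ⟪x - (2 * ⟪x, β⟫) • β, β⟫) • β = x := by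
  have hββ : ⟪β, β⟫ = 1 := by
    obtain ⟨i, j, hij, a, b, ha, hb, rfl⟩ := mem_iff.1 hβ
    exact norm_one hij ha hb
  rw [inner_sub_left, real_inner_smul_left, hββ]
  have : (2 * (⟪x, β⟫ - 2 * ⟪x, β⟫ * 1)) = -(2 * ⟪x, β⟫) := by ring
  rw [this, neg_smul, sub_neg_eq_add, sub_add_cancel]

lemma mem_W_root {w : EuclideanSpace ℝ (Fin l) ≃ₗᵢ[ℝ] EuclideanSpace ℝ (Fin l)}
    (hw : w ∈ Wgp l) :
    (∀ v ∈ Droots l, w v ∈ Droots l) ∧ (∀ v ∈ Droots l, w⁻¹ v ∈ Droots l) := by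
  refine Subgroup.closure_induction ?_ ?_ ?_ ?_ hw
  · rintro x ⟨β, hβ, hx⟩
    have hinv : ∀ v, x⁻¹ v = x v := by
      intro v
      have hxx : x (x v) = v := by rw [hx, hx, refl_invol hβ]
      calc x⁻¹ v = x⁻¹ (x (x v)) := by rw [hxx]
        _ = x v := by
            show x.symm (x (x v)) = x v
            rw [x.symm_apply_apply]
    constructor
    · intro v hv; rw [hx]; exact refl_root hv hβ
    · intro v hv; rw [hinv, hx]; exact refl_root hv hβ
  · exact ⟨fun v hv => hv, fun v hv => by rw [inv_one]; exact hv⟩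
  · rintro x y hx hy ⟨hx1, hx2⟩ ⟨hy1, hy2⟩
    constructor
    · intro v hv
      have : (x * y) v = x (y v) := rfl
      rw [this]; exact hx1 _ (hy1 v hv)
    · intro v hv
      have : (x * y)⁻¹ v = y⁻¹ (x⁻¹ v) := by rw [mul_inv_rev]; rfl
      rw [this]; exact hy2 _ (hx2 v hv)
  · rintro x hx ⟨hx1, hx2⟩
    exact ⟨hx2, by rw [inv_inv]; exact hx1⟩

lemma w_image {w : EuclideanSpace ℝ (Fin l) ≃ₗᵢ[ℝ] EuclideanSpace ℝ (Fin l)}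
    (hw : w ∈ Wgp l) : ⇑w '' Droots l = Droots l := by
  obtain ⟨h1, h2⟩ := mem_W_root hw
  apply Set.Subset.antisymm
  · rintro _ ⟨v, hv, rfl⟩; exact h1 v hv
  · intro v hv
    refine ⟨w⁻¹ v, h2 v hv, ?_⟩
    show w (w.symm v) = v
    rw [w.apply_symm_apply]

/-! ### the two standard `A₃` subsystems -/

section Std

variable (hl : 5 ≤ l)

def k0 : Fin l := ⟨0, by omega⟩
def k1 : Fin l := ⟨1, by omega⟩
def k2 : Fin l := ⟨2, by omega⟩
def k3 : Fin l := ⟨3, by omega⟩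

lemma h01 : k0 hl ≠ k1 hl := by simp [k0, k1, Fin.ext_iff]
lemma h02 : k0 hl ≠ k2 hl := by simp [k0, k2, Fin.ext_iff]
lemma h03 : k0 hl ≠ k3 hl := by simp [k0, k3, Fin.ext_iff]
lemma h12 : k1 hl ≠ k2 hl := by simp [k1, k2, Fin.ext_iff]
lemma h13 : k1 hl ≠ k3 hl := by simp [k1, k3, Fin.ext_iff]
lemma h23 : k2 hl ≠ k3 hl := by simp [k2, k3, Fin.ext_iff]

def al : EuclideanSpace ℝ (Fin l) := rt (k0 hl) (k1 hl) 1 (-1)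
def be : EuclideanSpace ℝ (Fin l) := rt (k1 hl) (k2 hl) 1 (-1)
def gaB : EuclideanSpace ℝ (Fin l) := rt (k0 hl) (k1 hl) (-1) (-1)
def gaA : EuclideanSpace ℝ (Fin l) := rt (k2 hl) (k3 hl) 1 (-1)

def V1 : Submodule ℝ (EuclideanSpace ℝ (Fin l)) :=
  Submodule.span ℝ {al hl, be hl, gaB hl}
def V2 : Submodule ℝ (EuclideanSpace ℝ (Fin l)) :=
  Submodule.span ℝ {al hl, be hl, gaA hl}

def T1 : Set (EuclideanSpace ℝ (Fin l)) := Droots l ∩ (V1 hl : Set _)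
def T2 : Set (EuclideanSpace ℝ (Fin l)) := Droots l ∩ (V2 hl : Set _)

lemma al_mem : al hl ∈ Droots l := rt_mem (h01 hl) (Or.inl rfl) (Or.inr rfl)
lemma be_mem : be hl ∈ Droots l := rt_mem (h12 hl) (Or.inl rfl) (Or.inr rfl)
lemma gaB_mem : gaB hl ∈ Droots l := rt_mem (h01 hl) (Or.inr rfl) (Or.inr rfl)
lemma gaA_mem : gaA hl ∈ Droots l := rt_mem (h23 hl) (Or.inl rfl) (Or.inr rfl)

lemma inner_al_be : ⟪al hl, be hl⟫ = -(1/2) := by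
  rw [al, be, inner_rt_rt (h01 hl) (h12 hl), if_neg (h01 hl), if_neg (h02 hl),
    if_pos rfl, if_neg (h12 hl)]
  norm_num

lemma inner_al_gaB : ⟪al hl, gaB hl⟫ = 0 := by
  rw [al, gaB, inner_rt_rt (h01 hl) (h01 hl), if_pos rfl, if_neg (h01 hl),
    if_neg (h01 hl).symm, if_pos rfl]
  norm_num

lemma inner_be_gaB : ⟪be hl, gaB hl⟫ = -(1/2) := by
  rw [be, gaB, inner_rt_rt (h12 hl) (h01 hl), if_neg (h01 hl).symm, if_pos rfl,
    if_neg (h02 hl).symm, if_neg (h12 hl).symm]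
  norm_num

lemma inner_al_gaA : ⟪al hl, gaA hl⟫ = 0 := by
  rw [al, gaA, inner_rt_rt (h01 hl) (h23 hl), if_neg (h02 hl), if_neg (h03 hl),
    if_neg (h12 hl), if_neg (h13 hl)]
  norm_num

lemma inner_be_gaA : ⟪be hl, gaA hl⟫ = -(1/2) := by
  rw [be, gaA, inner_rt_rt (h12 hl) (h23 hl), if_neg (h12 hl), if_neg (h13 hl),
    if_pos rfl, if_neg (h23 hl)]
  norm_num

lemma T1_eq : T1 hl = Droots l ∩
    (Submodule.span ℝ {al hl, be hl, gaB hl} : Submodule ℝ _) := rfl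
lemma T2_eq : T2 hl = Droots l ∩
    (Submodule.span ℝ {al hl, be hl, gaA hl} : Submodule ℝ _) := rfl

end Std

/-! ### transitivity within each type -/

lemma exists_not_mem4 (hl : 5 ≤ l) (p q r s : Fin l) :
    ∃ u : Fin l, u ≠ p ∧ u ≠ q ∧ u ≠ r ∧ u ≠ s := by
  by_contra h
  push_neg at h
  have hsub : (Finset.univ : Finset (Fin l)) ⊆ {p, q, r, s} := by
    intro u _
    simp only [Finset.mem_insert, Finset.mem_singleton]
    by_cases h1 : u = p
    · exact Or.inl h1
    by_cases h2 : u = q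
    · exact Or.inr (Or.inl h2)
    by_cases h3 : u = r
    · exact Or.inr (Or.inr (Or.inl h3))
    exact Or.inr (Or.inr (Or.inr (h u h1 h2 h3)))
  have hc := Finset.card_le_card hsub
  have hc4 : ({p, q, r, s} : Finset (Fin l)).card ≤ 4 := by
    refine le_trans (Finset.card_insert_le _ _) ?_
    have := Finset.card_insert_le q ({r, s} : Finset (Fin l))
    have h2 := Finset.card_insert_le r ({s} : Finset (Fin l))
    simp only [Finset.card_singleton] at *
    omega
  rw [Finset.card_univ, Fintype.card_fin] at hc
  omega

lemma exists_perm4 (hl : 5 ≤ l) {p q r s : Fin l} (hpq : p ≠ q) (hpr : p ≠ r) (hps : p ≠ s)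
    (hqr : q ≠ r) (hqs : q ≠ s) (hrs : r ≠ s) :
    ∃ σ : Equiv.Perm (Fin l), σ p = k0 hl ∧ σ q = k1 hl ∧ σ r = k2 hl ∧ σ s = k3 hl := by
  set e1 := Equiv.swap p (k0 hl) with he1
  have hp1 : e1 p = k0 hl := Equiv.swap_apply_left _ _
  have hq1 : e1 q ≠ k0 hl := fun h => hpq (e1.injective (hp1.symm ▸ h)).symm
  have hr1 : e1 r ≠ k0 hl := fun h => hpr (e1.injective (hp1.symm ▸ h)).symm
  have hs1 : e1 s ≠ k0 hl := fun h => hps (e1.injective (hp1.symm ▸ h)).symm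
  have hqr1 : e1 q ≠ e1 r := fun h => hqr (e1.injective h)
  have hqs1 : e1 q ≠ e1 s := fun h => hqs (e1.injective h)
  have hrs1 : e1 r ≠ e1 s := fun h => hrs (e1.injective h)
  set e2 := Equiv.swap (e1 q) (k1 hl) with he2
  have hq2 : e2 (e1 q) = k1 hl := Equiv.swap_apply_left _ _
  have hp2 : e2 (k0 hl) = k0 hl := Equiv.swap_apply_of_ne_of_ne (Ne.symm hq1) (h01 hl)
  have hr2k0 : e2 (e1 r) ≠ k0 hl := fun h => hr1 (e2.injective (hp2.symm ▸ h))
  have hs2k0 : e2 (e1 s) ≠ k0 hl := fun h => hs1 (e2.injective (hp2.symm ▸ h))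
  have hr2k1 : e2 (e1 r) ≠ k1 hl := fun h => hqr1 (e2.injective (hq2.symm ▸ h)).symm
  have hs2k1 : e2 (e1 s) ≠ k1 hl := fun h => hqs1 (e2.injective (hq2.symm ▸ h)).symm
  have hrs2 : e2 (e1 r) ≠ e2 (e1 s) := fun h => hrs1 (e2.injective h)
  set e3 := Equiv.swap (e2 (e1 r)) (k2 hl) with he3
  have hr3 : e3 (e2 (e1 r)) = k2 hl := Equiv.swap_apply_left _ _
  have hp3 : e3 (k0 hl) = k0 hl := Equiv.swap_apply_of_ne_of_ne (Ne.symm hr2k0) (h02 hl)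
  have hq3 : e3 (k1 hl) = k1 hl := Equiv.swap_apply_of_ne_of_ne (Ne.symm hr2k1) (h12 hl)
  have hs3k0 : e3 (e2 (e1 s)) ≠ k0 hl := fun h => hs2k0 (e3.injective (hp3.symm ▸ h))
  have hs3k1 : e3 (e2 (e1 s)) ≠ k1 hl := fun h => hs2k1 (e3.injective (hq3.symm ▸ h))
  have hs3k2 : e3 (e2 (e1 s)) ≠ k2 hl := fun h => hrs2 (e3.injective (hr3.symm ▸ h)).symm
  set e4 := Equiv.swap (e3 (e2 (e1 s))) (k3 hl) with he4
  have hs4 : e4 (e3 (e2 (e1 s))) = k3 hl := Equiv.swap_apply_left _ _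
  have hp4 : e4 (k0 hl) = k0 hl := Equiv.swap_apply_of_ne_of_ne (Ne.symm hs3k0) (h03 hl)
  have hq4 : e4 (k1 hl) = k1 hl := Equiv.swap_apply_of_ne_of_ne (Ne.symm hs3k1) (h13 hl)
  have hr4 : e4 (k2 hl) = k2 hl := Equiv.swap_apply_of_ne_of_ne (Ne.symm hs3k2) (h23 hl)
  refine ⟨((e1.trans e2).trans e3).trans e4, ?_, ?_, ?_, ?_⟩
  · simp only [Equiv.trans_apply, hp1, hp2, hp3, hp4]
  · simp only [Equiv.trans_apply, hq2, hq3, hq4]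
  · simp only [Equiv.trans_apply, hr3, hr4]
  · simp only [Equiv.trans_apply, hs4]

lemma diag_congr {η₁ η₂ : Fin l → ℝ} (h₁ : ∀ t, Sgn (η₁ t)) (h₂ : ∀ t, Sgn (η₂ t))
    (h : η₁ = η₂) : diagIso η₁ h₁ = diagIso η₂ h₂ := by subst h; rfl

/-- sign gadget: flip coordinates `i` and `u` exactly when `c = -1` -/
def cfSgn (i u : Fin l) (c : ℝ) : Fin l → ℝ :=
  if c = -1 then flipSgn i u else fun _ => 1

lemma cfSgn_sgn (i u : Fin l) (c : ℝ) : ∀ t, Sgn (cfSgn i u c t) := by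
  unfold cfSgn
  split_ifs
  · exact flipSgn_sgn i u
  · exact fun _ => Or.inl rfl

lemma cfSgn_mem {i u : Fin l} (hiu : i ≠ u) (c : ℝ) :
    diagIso (cfSgn i u c) (cfSgn_sgn i u c) ∈ Wgp l := by
  by_cases hc : c = -1
  · rw [diag_congr _ (flipSgn_sgn i u) (show cfSgn i u c = flipSgn i u by
      rw [cfSgn, if_pos hc])]
    exact flip_mem_W hiu
  · rw [diag_congr _ (fun _ => Or.inl rfl) (show cfSgn i u c = fun _ => 1 by
      rw [cfSgn, if_neg hc]), diag_one]
    exact one_mem _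

lemma cfSgn_at {c : ℝ} (hc : Sgn c) (i u : Fin l) : cfSgn i u c i = c := by
  rcases hc with rfl|rfl
  · rw [cfSgn, if_neg (by norm_num : (1:ℝ) ≠ -1)]
  · rw [cfSgn, if_pos rfl, flipSgn, if_pos rfl]

lemma cfSgn_other {i u t : Fin l} (hti : t ≠ i) (htu : t ≠ u) (c : ℝ) :
    cfSgn i u c t = 1 := by
  rw [cfSgn]
  split_ifs
  · rw [flipSgn, if_neg hti, if_neg htu]
  · rfl

lemma img_T {w : EuclideanSpace ℝ (Fin l) ≃ₗᵢ[ℝ] EuclideanSpace ℝ (Fin l)}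
    (hw : w ∈ Wgp l) (α β γ : EuclideanSpace ℝ (Fin l)) :
    ⇑w '' (Droots l ∩ (Submodule.span ℝ {α, β, γ} : Submodule ℝ _))
      = Droots l ∩ (Submodule.span ℝ {w α, w β, w γ} : Submodule ℝ _) := by
  rw [Set.image_inter w.injective, w_image hw]
  congr 1
  have h1 : ⇑w '' (Submodule.span ℝ {α, β, γ} : Set _)
      = (Submodule.map (w.toLinearEquiv : EuclideanSpace ℝ (Fin l) →ₗ[ℝ] EuclideanSpace ℝ (Fin l))
          (Submodule.span ℝ {α, β, γ}) : Set _) := by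
    rw [Submodule.map_coe]; rfl
  rw [h1, Submodule.map_span]
  congr 1
  rw [show (⇑(w.toLinearEquiv : EuclideanSpace ℝ (Fin l) →ₗ[ℝ] EuclideanSpace ℝ (Fin l)))
      = ⇑w from rfl]
  rw [Set.image_insert_eq, Set.image_insert_eq, Set.image_singleton]

/-- every `A₃` configuration is `W`-conjugate to one of the two standard ones -/
lemma conj_std (hl : 5 ≤ l) {α β γ : EuclideanSpace ℝ (Fin l)}
    (hα : α ∈ Droots l) (hβ : β ∈ Droots l) (hγ : γ ∈ Droots l)
    (hag : ⟪α, γ⟫ = 0) (hab : ⟪α, β⟫ = -(1/2)) (hbg : ⟪β, γ⟫ = -(1/2)) :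
    (∃ w ∈ Wgp l, ⇑w '' (Droots l ∩ (Submodule.span ℝ {α, β, γ} : Submodule ℝ _)) = T1 hl) ∨
    (∃ w ∈ Wgp l, ⇑w '' (Droots l ∩ (Submodule.span ℝ {α, β, γ} : Submodule ℝ _)) = T2 hl) := by
  rcases classify hα hβ hγ hag hab hbg with
    ⟨p, q, r, a, b, d, hpq, hqr, hpr, ha, hb, hd, hA, hB, hG⟩ |
    ⟨p, q, r, s, a, b, d, g, hpq, hpr, hps, hqr, hqs, hrs, ha, hb, hd, hg, hA, hB, hG⟩
  · -- type D₃ : three coordinates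
    left
    obtain ⟨s, hsp, hsq, hsr, -⟩ := exists_not_mem4 hl p q r r
    obtain ⟨u, hup, huq, hur, hus⟩ := exists_not_mem4 hl p q r s
    obtain ⟨σ, hσp, hσq, hσr, -⟩ :=
      exists_perm4 hl hpq hpr hsp.symm hqr hsq.symm hsr.symm
    set η : Fin l → ℝ := fun t => cfSgn p u a t * (cfSgn q u (-b) t * cfSgn r u (-d) t)
      with hηdef
    have hηs : ∀ t, Sgn (η t) :=
      fun t => (cfSgn_sgn p u a t).mul ((cfSgn_sgn q u (-b) t).mul (cfSgn_sgn r u (-d) t))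
    have hηmem : diagIso η hηs ∈ Wgp l := by
      rw [diag_congr hηs (fun t => (cfSgn_sgn p u a t).mul ((cfSgn_sgn q u (-b) t).mul
        (cfSgn_sgn r u (-d) t))) rfl,
        ← diag_mul _ _ (cfSgn_sgn p u a) (fun t => (cfSgn_sgn q u (-b) t).mul (cfSgn_sgn r u (-d) t)),
        ← diag_mul _ _ (cfSgn_sgn q u (-b)) (cfSgn_sgn r u (-d))]
      exact mul_mem (cfSgn_mem hup.symm a)
        (mul_mem (cfSgn_mem huq.symm (-b)) (cfSgn_mem hur.symm (-d)))
    have hηp : η p = a := by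
      rw [hηdef]
      simp only
      rw [cfSgn_at ha, cfSgn_other hpq hup.symm, cfSgn_other hpr hup.symm]
      ring
    have hηq : η q = -b := by
      rw [hηdef]
      simp only
      rw [cfSgn_at hb.neg, cfSgn_other hpq.symm huq.symm, cfSgn_other hqr huq.symm]
      ring
    have hηr : η r = -d := by
      rw [hηdef]
      simp only
      rw [cfSgn_at hd.neg, cfSgn_other hpr.symm hur.symm, cfSgn_other hqr.symm hur.symm]
      ring
    refine ⟨permIso σ * diagIso η hηs, mul_mem (permIso_mem_W σ) hηmem, ?_⟩
    have happly : ∀ (i j : Fin l), i ≠ j → ∀ a' b' : ℝ,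
        (permIso σ * diagIso η hηs) (rt i j a' b') = rt (σ i) (σ j) (η i * a') (η j * b') := by
      intro i j hij a' b'
      rw [LinearIsometryEquiv.coe_mul, Function.comp_apply, diagIso_rt hij, permIso_rt]
    have hwα : (permIso σ * diagIso η hηs) α = al hl := by
      rw [hA, happly p q hpq, hσp, hσq, hηp, hηq, ha.sq,
        show -b * b = -1 by rw [neg_mul, hb.sq]]
      rfl
    have hwβ : (permIso σ * diagIso η hηs) β = be hl := by
      rw [hB, happly q r hqr, hσq, hσr, hηq, hηr,
        show -b * -b = 1 by rw [neg_mul_neg, hb.sq],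
        show -d * d = -1 by rw [neg_mul, hd.sq]]
      rfl
    have hwγ : (permIso σ * diagIso η hηs) γ = gaB hl := by
      rw [hG, happly p q hpq, hσp, hσq, hηp, hηq,
        show a * -a = -1 by rw [mul_neg, ha.sq],
        show -b * b = -1 by rw [neg_mul, hb.sq]]
      rfl
    rw [img_T (mul_mem (permIso_mem_W σ) hηmem), hwα, hwβ, hwγ]
    rfl
  · -- type A₃ : four coordinates
    right
    obtain ⟨u, hup, huq, hur, hus⟩ := exists_not_mem4 hl p q r s
    obtain ⟨σ, hσp, hσq, hσr, hσs⟩ := exists_perm4 hl hpq hpr hps hqr hqs hrs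
    set η : Fin l → ℝ := fun t => cfSgn p u a t *
        (cfSgn q u (-b) t * (cfSgn r u (-d) t * cfSgn s u (-g) t)) with hηdef
    have hηs : ∀ t, Sgn (η t) :=
      fun t => (cfSgn_sgn p u a t).mul ((cfSgn_sgn q u (-b) t).mul
        ((cfSgn_sgn r u (-d) t).mul (cfSgn_sgn s u (-g) t)))
    have hηmem : diagIso η hηs ∈ Wgp l := by
      rw [diag_congr hηs (fun t => (cfSgn_sgn p u a t).mul ((cfSgn_sgn q u (-b) t).mul
        ((cfSgn_sgn r u (-d) t).mul (cfSgn_sgn s u (-g) t)))) rfl,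
        ← diag_mul _ _ (cfSgn_sgn p u a) (fun t => (cfSgn_sgn q u (-b) t).mul
          ((cfSgn_sgn r u (-d) t).mul (cfSgn_sgn s u (-g) t))),
        ← diag_mul _ _ (cfSgn_sgn q u (-b)) (fun t => (cfSgn_sgn r u (-d) t).mul
          (cfSgn_sgn s u (-g) t)),
        ← diag_mul _ _ (cfSgn_sgn r u (-d)) (cfSgn_sgn s u (-g))]
      exact mul_mem (cfSgn_mem hup.symm a)
        (mul_mem (cfSgn_mem huq.symm (-b))
          (mul_mem (cfSgn_mem hur.symm (-d)) (cfSgn_mem hus.symm (-g))))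
    have hηp : η p = a := by
      rw [hηdef]
      simp only
      rw [cfSgn_at ha, cfSgn_other hpq hup.symm, cfSgn_other hpr hup.symm,
        cfSgn_other hps hup.symm]
      ring
    have hηq : η q = -b := by
      rw [hηdef]
      simp only
      rw [cfSgn_at hb.neg, cfSgn_other hpq.symm huq.symm, cfSgn_other hqr huq.symm,
        cfSgn_other hqs huq.symm]
      ring
    have hηr : η r = -d := by
      rw [hηdef]
      simp only
      rw [cfSgn_at hd.neg, cfSgn_other hpr.symm hur.symm, cfSgn_other hqr.symm hur.symm,
        cfSgn_other hrs hur.symm]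
      ring
    have hηt : η s = -g := by
      rw [hηdef]
      simp only
      rw [cfSgn_at hg.neg, cfSgn_other hps.symm hus.symm, cfSgn_other hqs.symm hus.symm,
        cfSgn_other hrs.symm hus.symm]
      ring
    refine ⟨permIso σ * diagIso η hηs, mul_mem (permIso_mem_W σ) hηmem, ?_⟩
    have happly : ∀ (i j : Fin l), i ≠ j → ∀ a' b' : ℝ,
        (permIso σ * diagIso η hηs) (rt i j a' b') = rt (σ i) (σ j) (η i * a') (η j * b') := by
      intro i j hij a' b'
      rw [LinearIsometryEquiv.coe_mul, Function.comp_apply, diagIso_rt hij, permIso_rt]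
    have hwα : (permIso σ * diagIso η hηs) α = al hl := by
      rw [hA, happly p q hpq, hσp, hσq, hηp, hηq, ha.sq,
        show -b * b = -1 by rw [neg_mul, hb.sq]]
      rfl
    have hwβ : (permIso σ * diagIso η hηs) β = be hl := by
      rw [hB, happly q r hqr, hσq, hσr, hηq, hηr,
        show -b * -b = 1 by rw [neg_mul_neg, hb.sq],
        show -d * d = -1 by rw [neg_mul, hd.sq]]
      rfl
    have hwγ : (permIso σ * diagIso η hηs) γ = gaA hl := by
      rw [hG, happly r s hrs, hσr, hσs, hηr, hηt,
        show -d * -d = 1 by rw [neg_mul_neg, hd.sq],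
        show -g * g = -1 by rw [neg_mul, hg.sq]]
      rfl
    rw [img_T (mul_mem (permIso_mem_W σ) hηmem), hwα, hwβ, hwγ]
    rfl

/-! ### the two standard subsystems are not conjugate -/

def Oset (T : Set (EuclideanSpace ℝ (Fin l))) : Set (EuclideanSpace ℝ (Fin l)) :=
  {δ | δ ∈ Droots l ∧ ∀ ρ ∈ T, ⟪δ, ρ⟫ = 0}

lemma Oset_img {w : EuclideanSpace ℝ (Fin l) ≃ₗᵢ[ℝ] EuclideanSpace ℝ (Fin l)}
    (hw : w ∈ Wgp l) (T : Set (EuclideanSpace ℝ (Fin l))) :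
    ⇑w '' Oset T ⊆ Oset (⇑w '' T) := by
  rintro _ ⟨δ, ⟨hδD, hδO⟩, rfl⟩
  refine ⟨(mem_W_root hw).1 δ hδD, ?_⟩
  rintro _ ⟨ρ, hρ, rfl⟩
  rw [LinearIsometryEquiv.inner_map_map]
  exact hδO ρ hρ

section Std2

variable (hl : 5 ≤ l)

def k4 : Fin l := ⟨4, by omega⟩

lemma h04 : k0 hl ≠ k4 hl := by simp [k0, k4, Fin.ext_iff]
lemma h14 : k1 hl ≠ k4 hl := by simp [k1, k4, Fin.ext_iff]
lemma h24 : k2 hl ≠ k4 hl := by simp [k2, k4, Fin.ext_iff]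
lemma h34 : k3 hl ≠ k4 hl := by simp [k3, k4, Fin.ext_iff]

/-- the coordinate subspace on `k0, k1, k2` -/
def C3 : Submodule ℝ (EuclideanSpace ℝ (Fin l)) where
  carrier := {x | ∀ t, t ≠ k0 hl → t ≠ k1 hl → t ≠ k2 hl → x t = 0}
  add_mem' := fun hx hy t h0 h1 h2 => by
    have := hx t h0 h1 h2; have := hy t h0 h1 h2
    simp only [PiLp.add_apply]; simp [*]
  zero_mem' := fun t _ _ _ => rfl
  smul_mem' := fun c x hx t h0 h1 h2 => by
    have := hx t h0 h1 h2
    simp only [PiLp.smul_apply, smul_eq_mul]; simp [*]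

lemma V1_le_C3 : V1 hl ≤ C3 hl := by
  rw [V1, Submodule.span_le]
  rintro x hx
  simp only [Set.mem_insert_iff, Set.mem_singleton_iff] at hx
  rcases hx with rfl|rfl|rfl
  · exact fun t h0 h1 _ => rt_apply_other h0 h1 1 (-1)
  · exact fun t _ h1 h2 => rt_apply_other h1 h2 1 (-1)
  · exact fun t h0 h1 _ => rt_apply_other h0 h1 (-1) (-1)

lemma single_comb {i j : Fin l} (hij : i ≠ j) :
    (EuclideanSpace.single i (1:ℝ))
      = (Real.sqrt 2 / 2) • rt i j 1 1 + (Real.sqrt 2 / 2) • rt i j 1 (-1) := by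
  ext t
  simp only [PiLp.add_apply, PiLp.smul_apply, smul_eq_mul, rt_eval,
    EuclideanSpace.single_apply]
  have h := s2sq
  rcases eq_or_ne t i with rfl|h1
  · simp only [if_pos rfl, if_neg hij, add_zero, eq_self_iff_true, if_true]
    field_simp
    ring
  · rcases eq_or_ne t j with rfl|h2
    · simp only [if_neg h1, if_pos rfl, zero_add, eq_self_iff_true, if_true]
      ring
    · simp only [if_neg h1, if_neg h2, add_zero]
      ring

lemma span_single {S : Set (EuclideanSpace ℝ (Fin l))} {i j : Fin l} (hij : i ≠ j)
    (h1 : rt i j 1 1 ∈ S) (h2 : rt i j 1 (-1) ∈ S) :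
    EuclideanSpace.single i (1:ℝ) ∈ Submodule.span ℝ S := by
  rw [single_comb hij]
  exact add_mem (Submodule.smul_mem _ _ (Submodule.subset_span h1))
    (Submodule.smul_mem _ _ (Submodule.subset_span h2))

lemma al_T1 : al hl ∈ T1 hl := ⟨al_mem hl, Submodule.subset_span (by simp)⟩
lemma be_T1 : be hl ∈ T1 hl := ⟨be_mem hl, Submodule.subset_span (by simp)⟩

lemma nal_eq : rt (k0 hl) (k1 hl) 1 1 = -(gaB hl) := by
  rw [gaB, ← rt_neg]; norm_num

lemma nal_T1 : rt (k0 hl) (k1 hl) 1 1 ∈ T1 hl :=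
  ⟨rt_mem (h01 hl) (Or.inl rfl) (Or.inl rfl),
    by rw [nal_eq]; exact neg_mem (Submodule.subset_span (by simp))⟩

lemma nbe_eq : rt (k1 hl) (k2 hl) 1 1 = -al hl - gaB hl - be hl := by
  ext t
  simp only [al, be, gaB, PiLp.sub_apply, PiLp.neg_apply, rt_eval]
  rcases eq_or_ne t (k0 hl) with rfl|h0
  · simp only [if_pos rfl, if_neg (h01 hl), if_neg (h02 hl), add_zero, zero_add,
      eq_self_iff_true, if_true]
    ring
  · rcases eq_or_ne t (k1 hl) with rfl|h1
    · simp only [if_pos rfl, if_neg (h12 hl), if_neg (h01 hl).symm, add_zero, zero_add,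
        eq_self_iff_true, if_true]
      ring
    · rcases eq_or_ne t (k2 hl) with rfl|h2
      · simp only [if_pos rfl, if_neg (h12 hl).symm, if_neg (h02 hl).symm, add_zero,
          zero_add, eq_self_iff_true, if_true]
        ring
      · simp only [if_neg h0, if_neg h1, if_neg h2, add_zero, zero_add]
        ring

lemma nbe_T1 : rt (k1 hl) (k2 hl) 1 1 ∈ T1 hl := by
  refine ⟨rt_mem (h12 hl) (Or.inl rfl) (Or.inl rfl), ?_⟩
  rw [nbe_eq]
  exact sub_mem (sub_mem (neg_mem (Submodule.subset_span (by simp)))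
    (Submodule.subset_span (by simp))) (Submodule.subset_span (by simp))

lemma O1_rt {t m : Fin l} (htm : t ≠ m)
    (ht0 : t ≠ k0 hl) (ht1 : t ≠ k1 hl) (ht2 : t ≠ k2 hl)
    (hm0 : m ≠ k0 hl) (hm1 : m ≠ k1 hl) (hm2 : m ≠ k2 hl)
    {e : ℝ} (he : Sgn e) : rt t m 1 e ∈ Oset (T1 hl) := by
  refine ⟨rt_mem htm (Or.inl rfl) he, ?_⟩
  intro ρ hρ
  have hc3 := V1_le_C3 hl hρ.2
  rw [inner_rt htm, hc3 t ht0 ht1 ht2, hc3 m hm0 hm1 hm2]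
  simp

lemma top1 : Submodule.span ℝ (T1 hl ∪ Oset (T1 hl)) = ⊤ := by
  rw [eq_top_iff, ← (EuclideanSpace.basisFun (Fin l) ℝ).toBasis.span_eq]
  refine Submodule.span_le.2 ?_
  rintro _ ⟨t, rfl⟩
  rw [OrthonormalBasis.coe_toBasis, EuclideanSpace.basisFun_apply]
  by_cases ht0 : t = k0 hl
  · subst ht0
    exact span_single (h01 hl) (Set.mem_union_left _ (nal_T1 hl))
      (Set.mem_union_left _ (al_T1 hl))
  by_cases ht1 : t = k1 hl
  · subst ht1
    exact span_single (h12 hl) (Set.mem_union_left _ (nbe_T1 hl))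
      (Set.mem_union_left _ (be_T1 hl))
  by_cases ht2 : t = k2 hl
  · subst ht2
    refine span_single (h12 hl).symm ?_ ?_
    · exact Set.mem_union_left _ (by rw [rt_comm]; exact nbe_T1 hl)
    · refine Set.mem_union_left _ ⟨rt_mem (h12 hl).symm (Or.inl rfl) (Or.inr rfl), ?_⟩
      have : rt (k2 hl) (k1 hl) 1 (-1) = -(be hl) := by
        rw [be, rt_comm, ← rt_neg]; norm_num
      rw [this]
      exact neg_mem (Submodule.subset_span (by simp))
  by_cases ht3 : t = k3 hl
  · subst ht3
    exact span_single (h34 hl)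
      (Set.mem_union_right _ (O1_rt hl (h34 hl) (h03 hl).symm (h13 hl).symm (h23 hl).symm
        (h04 hl).symm (h14 hl).symm (h24 hl).symm (Or.inl rfl)))
      (Set.mem_union_right _ (O1_rt hl (h34 hl) (h03 hl).symm (h13 hl).symm (h23 hl).symm
        (h04 hl).symm (h14 hl).symm (h24 hl).symm (Or.inr rfl)))
  · exact span_single ht3
      (Set.mem_union_right _ (O1_rt hl ht3 ht0 ht1 ht2 (h03 hl).symm (h13 hl).symm
        (h23 hl).symm (Or.inl rfl)))
      (Set.mem_union_right _ (O1_rt hl ht3 ht0 ht1 ht2 (h03 hl).symm (h13 hl).symm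
        (h23 hl).symm (Or.inr rfl)))

end Std2

section Std3

variable (hl : 5 ≤ l)

/-- the linear functional `x₀ + x₁ + x₂ + x₃` -/
def phi : EuclideanSpace ℝ (Fin l) →ₗ[ℝ] ℝ where
  toFun := fun x => x (k0 hl) + x (k1 hl) + x (k2 hl) + x (k3 hl)
  map_add' := fun x y => by simp only [PiLp.add_apply]; ring
  map_smul' := fun c x => by
    simp only [PiLp.smul_apply, smul_eq_mul, RingHom.id_apply]; ring

lemma phi_apply (x : EuclideanSpace ℝ (Fin l)) :
    phi hl x = x (k0 hl) + x (k1 hl) + x (k2 hl) + x (k3 hl) := rfl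

def zet : EuclideanSpace ℝ (Fin l) := rt (k0 hl) (k3 hl) 1 (-1)

lemma zet_eq : zet hl = al hl + be hl + gaA hl := by
  ext t
  simp only [zet, al, be, gaA, PiLp.add_apply, rt_eval]
  rcases eq_or_ne t (k0 hl) with rfl|h0
  · simp only [if_pos rfl, if_neg (h01 hl), if_neg (h02 hl), if_neg (h03 hl),
      add_zero, zero_add, eq_self_iff_true, if_true]
    ring
  · rcases eq_or_ne t (k1 hl) with rfl|h1
    · simp only [if_pos rfl, if_neg (h01 hl).symm, if_neg (h12 hl), if_neg (h13 hl),
        add_zero, zero_add, eq_self_iff_true, if_true]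
      ring
    · rcases eq_or_ne t (k2 hl) with rfl|h2
      · simp only [if_pos rfl, if_neg (h02 hl).symm, if_neg (h12 hl).symm,
          if_neg (h23 hl), add_zero, zero_add, eq_self_iff_true, if_true]
        ring
      · rcases eq_or_ne t (k3 hl) with rfl|h3
        · simp only [if_pos rfl, if_neg (h03 hl).symm, if_neg (h13 hl).symm,
            if_neg (h23 hl).symm, add_zero, zero_add, eq_self_iff_true, if_true]
          ring
        · simp only [if_neg h0, if_neg h1, if_neg h2, if_neg h3, add_zero, zero_add]
          ring

lemma al_T2 : al hl ∈ T2 hl := ⟨al_mem hl, Submodule.subset_span (by simp)⟩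
lemma be_T2 : be hl ∈ T2 hl := ⟨be_mem hl, Submodule.subset_span (by simp)⟩
lemma gaA_T2 : gaA hl ∈ T2 hl := ⟨gaA_mem hl, Submodule.subset_span (by simp)⟩

lemma zet_T2 : zet hl ∈ T2 hl := by
  refine ⟨rt_mem (h03 hl) (Or.inl rfl) (Or.inr rfl), ?_⟩
  rw [zet_eq]
  exact add_mem (add_mem (Submodule.subset_span (by simp)) (Submodule.subset_span (by simp)))
    (Submodule.subset_span (by simp))

lemma V2_le_ker : V2 hl ≤ LinearMap.ker (phi hl) := by
  rw [V2, Submodule.span_le]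
  rintro x hx
  simp only [Set.mem_insert_iff, Set.mem_singleton_iff] at hx
  rcases hx with rfl|rfl|rfl <;>
    simp only [SetLike.mem_coe, LinearMap.mem_ker, phi_apply, al, be, gaA]
  · rw [rt_apply_left (h01 hl), rt_apply_right (h01 hl),
      rt_apply_other (h02 hl).symm (h12 hl).symm, rt_apply_other (h03 hl).symm (h13 hl).symm]
    ring
  · rw [rt_apply_other (h01 hl) (h02 hl), rt_apply_left (h12 hl), rt_apply_right (h12 hl),
      rt_apply_other (h13 hl).symm (h23 hl).symm]
    ring
  · rw [rt_apply_other (h02 hl) (h03 hl), rt_apply_other (h12 hl) (h13 hl),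
      rt_apply_left (h23 hl), rt_apply_right (h23 hl)]
    ring

lemma sgn_div_ne {c : ℝ} (hc : Sgn c) : c / Real.sqrt 2 ≠ 0 :=
  div_ne_zero hc.ne s2ne

lemma O2_ker : ∀ δ ∈ Oset (T2 hl), phi hl δ = 0 := by
  rintro δ ⟨hδD, hδO⟩
  obtain ⟨k, m, hkm, c, d, hc, hd, rfl⟩ := mem_iff.1 hδD
  have hval : ∀ ρ ∈ T2 hl, c * ρ k + d * ρ m = 0 := by
    intro ρ h
    have h2 := hδO ρ h
    rw [inner_rt hkm] at h2
    exact (div_eq_zero_iff.mp h2).resolve_right s2ne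
  have knot : ∀ (k' m' : Fin l) (c' d' : ℝ), Sgn c' → k' ≠ m' →
      (∀ ρ ∈ T2 hl, c' * ρ k' + d' * ρ m' = 0) →
      k' ≠ k0 hl ∧ k' ≠ k1 hl ∧ k' ≠ k2 hl ∧ k' ≠ k3 hl := by
    intro k' m' c' d' hc' hk'm' hv
    refine ⟨?_, ?_, ?_, ?_⟩
    · rintro rfl
      by_cases hm : m' = k1 hl
      · subst hm
        have h2 := hv (zet hl) (zet_T2 hl)
        rw [zet, rt_apply_left (h03 hl), rt_apply_other (h01 hl).symm (h13 hl)] at h2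
        exact mul_ne_zero hc'.ne (sgn_div_ne (Or.inl rfl)) (by linarith)
      · have h2 := hv (al hl) (al_T2 hl)
        rw [al, rt_apply_left (h01 hl), rt_apply_other hk'm'.symm hm] at h2
        exact mul_ne_zero hc'.ne (sgn_div_ne (Or.inl rfl)) (by linarith)
    · rintro rfl
      by_cases hm : m' = k2 hl
      · subst hm
        have h2 := hv (al hl) (al_T2 hl)
        rw [al, rt_apply_right (h01 hl), rt_apply_other (h02 hl).symm (h12 hl).symm] at h2
        exact mul_ne_zero hc'.ne (sgn_div_ne (Or.inr rfl)) (by linarith)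
      · have h2 := hv (be hl) (be_T2 hl)
        rw [be, rt_apply_left (h12 hl), rt_apply_other hk'm'.symm hm] at h2
        exact mul_ne_zero hc'.ne (sgn_div_ne (Or.inl rfl)) (by linarith)
    · rintro rfl
      by_cases hm : m' = k3 hl
      · subst hm
        have h2 := hv (be hl) (be_T2 hl)
        rw [be, rt_apply_right (h12 hl), rt_apply_other (h13 hl).symm (h23 hl).symm] at h2
        exact mul_ne_zero hc'.ne (sgn_div_ne (Or.inr rfl)) (by linarith)
      · have h2 := hv (gaA hl) (gaA_T2 hl)
        rw [gaA, rt_apply_left (h23 hl), rt_apply_other hk'm'.symm hm] at h2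
        exact mul_ne_zero hc'.ne (sgn_div_ne (Or.inl rfl)) (by linarith)
    · rintro rfl
      by_cases hm : m' = k2 hl
      · subst hm
        have h2 := hv (zet hl) (zet_T2 hl)
        rw [zet, rt_apply_right (h03 hl), rt_apply_other (h02 hl).symm (h23 hl)] at h2
        exact mul_ne_zero hc'.ne (sgn_div_ne (Or.inr rfl)) (by linarith)
      · have h2 := hv (gaA hl) (gaA_T2 hl)
        rw [gaA, rt_apply_right (h23 hl), rt_apply_other hm hk'm'.symm] at h2
        exact mul_ne_zero hc'.ne (sgn_div_ne (Or.inr rfl)) (by linarith)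
  obtain ⟨hk0, hk1, hk2, hk3⟩ := knot k m c d hc hkm hval
  obtain ⟨hm0, hm1, hm2, hm3⟩ := knot m k d c hd hkm.symm
    (fun ρ h => by have := hval ρ h; linarith)
  rw [phi_apply, rt_apply_other hk0.symm hm0.symm, rt_apply_other hk1.symm hm1.symm,
    rt_apply_other hk2.symm hm2.symm, rt_apply_other hk3.symm hm3.symm]
  ring

lemma span2_le : Submodule.span ℝ (T2 hl ∪ Oset (T2 hl)) ≤ LinearMap.ker (phi hl) := by
  rw [Submodule.span_le]
  rintro x (hx|hx)
  · exact V2_le_ker hl hx.2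
  · simp only [SetLike.mem_coe, LinearMap.mem_ker]
    exact O2_ker hl x hx

lemma not_conj : ¬ ∃ w ∈ Wgp l, ⇑w '' T1 hl = T2 hl := by
  rintro ⟨w, hw, him⟩
  have hmemtop : EuclideanSpace.single (k0 hl) (1:ℝ)
      ∈ Submodule.span ℝ (T2 hl ∪ Oset (T2 hl)) := by
    have hy : w.symm (EuclideanSpace.single (k0 hl) (1:ℝ))
        ∈ Submodule.span ℝ (T1 hl ∪ Oset (T1 hl)) := by
      rw [top1 hl]; exact Submodule.mem_top
    have happ := Submodule.apply_mem_span_image_of_mem_span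
      (w.toLinearEquiv.toLinearMap) hy
    simp only [LinearEquiv.coe_coe, LinearIsometryEquiv.coe_toLinearEquiv] at happ
    rw [w.apply_symm_apply] at happ
    refine Submodule.span_mono ?_ happ
    rintro _ ⟨y, hy', rfl⟩
    rcases hy' with hy1|hy1
    · exact Set.mem_union_left _ (him ▸ Set.mem_image_of_mem _ hy1)
    · refine Set.mem_union_right _ ?_
      have := Oset_img hw (T1 hl) (Set.mem_image_of_mem _ hy1)
      rwa [him] at this
  have hker := span2_le hl hmemtop
  rw [LinearMap.mem_ker, phi_apply] at hker
  rw [EuclideanSpace.single_apply, EuclideanSpace.single_apply, EuclideanSpace.single_apply,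
    EuclideanSpace.single_apply, if_pos rfl, if_neg (h01 hl).symm, if_neg (h02 hl).symm,
    if_neg (h03 hl).symm] at hker
  norm_num at hker

end Std3

end A3D
end

/-- In the root system of type `D_l` (`l ≥ 5`), the root subsystems of type `A₃`
form exactly two orbits under the Weyl group `W(D_l)`, the group generated by
the reflections in the roots. -/
theorem A3_two_orbits_D (l : ℕ) (hl : 5 ≤ l)
    (W : Subgroup (EuclideanSpace ℝ (Fin l) ≃ₗᵢ[ℝ] EuclideanSpace ℝ (Fin l)))
    (hW : W = Subgroup.closure {w | ∃ β ∈ Droots l, ∀ x, w x = x - (2 * ⟪x, β⟫) • β})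
    (A3sub : Set (EuclideanSpace ℝ (Fin l)) → Prop)
    (hA3 : ∀ T, A3sub T ↔ ∃ α β γ, α ∈ Droots l ∧ β ∈ Droots l ∧ γ ∈ Droots l ∧
      ⟪α, γ⟫ = 0 ∧ ⟪α, β⟫ = -(1 / 2) ∧ ⟪β, γ⟫ = -(1 / 2) ∧
      T = Droots l ∩ (Submodule.span ℝ {α, β, γ} : Submodule ℝ _)) :
    ∃ T₁ T₂, A3sub T₁ ∧ A3sub T₂ ∧ (¬∃ w ∈ W, ⇑w '' T₁ = T₂) ∧
      ∀ T, A3sub T → (∃ w ∈ W, ⇑w '' T = T₁) ∨ (∃ w ∈ W, ⇑w '' T = T₂) := by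
  subst hW
  refine ⟨A3D.T1 hl, A3D.T2 hl, ?_, ?_, ?_, ?_⟩
  · rw [hA3]
    exact ⟨A3D.al hl, A3D.be hl, A3D.gaB hl, A3D.al_mem hl, A3D.be_mem hl, A3D.gaB_mem hl,
      A3D.inner_al_gaB hl, A3D.inner_al_be hl, A3D.inner_be_gaB hl, A3D.T1_eq hl⟩
  · rw [hA3]
    exact ⟨A3D.al hl, A3D.be hl, A3D.gaA hl, A3D.al_mem hl, A3D.be_mem hl, A3D.gaA_mem hl,
      A3D.inner_al_gaA hl, A3D.inner_al_be hl, A3D.inner_be_gaA hl, A3D.T2_eq hl⟩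
  · exact A3D.not_conj hl
  · intro T hT
    rw [hA3] at hT
    obtain ⟨α, β, γ, hα, hβ, hγ, hag, hab, hbg, rfl⟩ := hT
    exact A3D.conj_std hl hα hβ hγ hag hab hbg
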